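/- Let $Q(\vec x, \vec y) = \sum_{h=0}^{n-1}\sum_{j=0}^{n-1-h} \frac{2^{h+j}}{2^{n-1}} \pi x_h y_j$ be the quadratic form of the expansion of the Fourier transform over $\mathbb{Z}_{2^n}$, on variable set $V = \{x_0,\ldots,x_{n-1}\} \cup \{y_0,\ldots,y_{n-1}\}$ with $I = \{x_0,\ldots,x_{n-1}\}$ and $O = \{y_0,\ldots,y_{n-1}\}$, and let $(G, I, O)$ be the induced geometry: $G$ is bipartite with an edge $x_h y_j$ of weight $2^{h+j}/2^{n-1}$ whenever $h + j \leq n-1$. Then the function $f(x_h) = y_{n-1-h}$, together with the partial order generated by $x_h \prec y_j$ for all $j \geq n-1-h$ and $x_h \prec x_{h'}$ for $h' < h$ appropriately extended, is a fractional-edge flow for $(G, I, O)$: $f$ is a flow, and the unique unit-weight edges are exactly the edges $x_h f(x_h) = x_h y_{n-1-h}$. -/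

import Mathlib

/-!
Rank the vertices by `x_h ↦ n - h` and `y_j ↦ 2n + j`; the partial order
`u = v ∨ rank u < rank v` puts every input below every output and `x_h` below `x_{h'}` for
`h' < h`. The neighbours of `f(x_h) = y_{n-1-h}` are the `x_{h'}` with `h' ≤ h`, so the flow
conditions hold. Since `2^{h+j}/2^{n-1} = 1` exactly when `h + j = n - 1`, the unit-weight
edges are exactly the edges `x_h f(x_h)`, and every fractional edge avoids `f`.
-/

/-- The vertex set of the geometry of the QFT quadratic form expansion: input vertices
`x_h` (`Sum.inl h`) and output vertices `y_j` (`Sum.inr j`). -/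
def qftV (n : ℕ) : Type := Fin n ⊕ Fin n

/-- The edge weights of the induced geometry: `W(x_h, y_j) = 2^{h+j}/2^{n-1}` when
`h + j ≤ n - 1`, and `0` otherwise (no edges within the `x`'s or within the `y`'s). -/
noncomputable def qftW (n : ℕ) : qftV n → qftV n → ℝ
  | Sum.inl h, Sum.inr j =>
      if h.val + j.val ≤ n - 1 then (2 : ℝ) ^ (h.val + j.val) / 2 ^ (n - 1) else 0
  | Sum.inr j, Sum.inl h =>
      if h.val + j.val ≤ n - 1 then (2 : ℝ) ^ (h.val + j.val) / 2 ^ (n - 1) else 0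
  | _, _ => 0

/-- Adjacency in the induced geometry: nonzero weight. -/
noncomputable def qftAdj (n : ℕ) (u v : qftV n) : Prop := qftW n u v ≠ 0

/-- The flow function `f(x_h) = y_{n-1-h}` (extended arbitrarily on the outputs). -/
def qftf (n : ℕ) (hn : 0 < n) : qftV n → qftV n
  | Sum.inl h => Sum.inr ⟨n - 1 - h.val, by omega⟩
  | Sum.inr j => Sum.inr j

section RankOrder

variable {α β : Type*} [Preorder β]

def rankOrder (rank : α → β) (u v : α) : Prop := u = v ∨ rank u < rank v

theorem isPartialOrder_rankOrder (rank : α → β) : IsPartialOrder α (rankOrder rank) where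
  refl _ := Or.inl rfl
  trans := by
    rintro a b c (rfl | hab) (rfl | hbc)
    exacts [Or.inl rfl, Or.inr hbc, Or.inr hab, Or.inr (hab.trans hbc)]
  antisymm := by
    rintro a b (rfl | hab) (hba | hba)
    exacts [rfl, rfl, hba.symm, absurd hab hba.not_gt]

theorem rankOrder_of_lt {rank : α → β} {u v : α} (h : rank u < rank v) : rankOrder rank u v :=
  Or.inr h

end RankOrder

section QFTGeometry

variable {n : ℕ}

def qftRank (n : ℕ) : qftV n → ℕ
  | Sum.inl h => n - h.val
  | Sum.inr j => 2 * n + j.val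

theorem qftRank_inl_lt_inr (h j : Fin n) : qftRank n (Sum.inl h) < qftRank n (Sum.inr j) := by
  simp only [qftRank]
  omega

theorem qftRank_inl_lt_inl {h h' : Fin n} (hlt : h'.val < h.val) :
    qftRank n (Sum.inl h) < qftRank n (Sum.inl h') := by
  simp only [qftRank]
  omega

theorem qftW_comm (u v : qftV n) : qftW n u v = qftW n v u := by
  rcases u with h | j <;> rcases v with h' | j' <;> rfl

theorem qftW_inl_inr_eq_one_iff (h j : Fin n) :
    qftW n (Sum.inl h) (Sum.inr j) = 1 ↔ h.val + j.val = n - 1 := by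
  simp only [qftW]
  split_ifs with hle
  · rw [div_eq_one_iff_eq (by positivity), pow_right_inj₀ two_pos (by norm_num)]
  · simp only [zero_ne_one, false_iff]
    omega

theorem qftAdj_inr_inr (j j' : Fin n) : ¬ qftAdj n (Sum.inr j) (Sum.inr j') :=
  fun hadj => hadj rfl

theorem qftAdj_inr_inl_iff (j h : Fin n) :
    qftAdj n (Sum.inr j) (Sum.inl h) ↔ h.val + j.val ≤ n - 1 := by
  simp only [qftAdj, qftW]
  split_ifs with hle
  · exact iff_of_true (by positivity) hle
  · exact iff_of_false (not_not.mpr rfl) hle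

variable (hn : 0 < n)

theorem qftf_inl_eq_inr_iff (h j : Fin n) :
    qftf n hn (Sum.inl h) = Sum.inr j ↔ h.val + j.val = n - 1 := by
  change Sum.inr _ = Sum.inr j ↔ _
  rw [Sum.inr.injEq, Fin.ext_iff, Fin.val_mk]
  omega

theorem qftW_inl_qftf (h : Fin n) : qftW n (Sum.inl h) (qftf n hn (Sum.inl h)) = 1 :=
  (qftW_inl_inr_eq_one_iff h _).mpr ((qftf_inl_eq_inr_iff hn h _).mp rfl)

theorem qftAdj_inl_qftf (h : Fin n) : qftAdj n (Sum.inl h) (qftf n hn (Sum.inl h)) :=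
  (qftW_inl_qftf hn h).trans_ne one_ne_zero

theorem qftRank_lt_of_adj_qftf {h : Fin n} {v : qftV n}
    (hadj : qftAdj n (qftf n hn (Sum.inl h)) v) (hne : v ≠ Sum.inl h) :
    qftRank n (Sum.inl h) < qftRank n v := by
  rcases v with h' | j'
  · have hle : h'.val + (n - 1 - h.val) ≤ n - 1 := (qftAdj_inr_inl_iff _ h').mp hadj
    have hne' : h'.val ≠ h.val := fun he => hne (congrArg Sum.inl (Fin.ext he))
    simp only [qftRank]
    omega
  · exact absurd hadj (qftAdj_inr_inr _ _)

end QFTGeometry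

/-- The QFT geometry has a fractional-edge flow: there is a partial order `r` containing
the generators `x_h ≺ y_j` for `j ≥ n-1-h` and `x_h ≺ x_{h'}` for `h' < h`, such that
`(f, r)` with `f(x_h) = y_{n-1-h}` is a flow; moreover every fractional-weight edge `ab`
satisfies `f(a) ≠ b` and `f(b) ≠ a`, and the unit-weight edges are exactly the edges
`x_h f(x_h) = x_h y_{n-1-h}`. -/
theorem qft_fractional_edge_flow (n : ℕ) (hn : 0 < n) :
    ∃ r : qftV n → qftV n → Prop, IsPartialOrder (qftV n) r ∧
      (∀ h j : Fin n, n - 1 - h.val ≤ j.val → r (Sum.inl h) (Sum.inr j)) ∧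
      (∀ h h' : Fin n, h'.val < h.val → r (Sum.inl h) (Sum.inl h')) ∧
      (∀ h : Fin n,
        (∀ h' : Fin n, qftf n hn (Sum.inl h) ≠ Sum.inl h') ∧
        qftAdj n (Sum.inl h) (qftf n hn (Sum.inl h)) ∧
        (r (Sum.inl h) (qftf n hn (Sum.inl h)) ∧
          (Sum.inl h : qftV n) ≠ qftf n hn (Sum.inl h)) ∧
        (∀ v, qftAdj n (qftf n hn (Sum.inl h)) v → v ≠ Sum.inl h →
          r (Sum.inl h) v ∧ (Sum.inl h : qftV n) ≠ v)) ∧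
      (∀ u v, qftAdj n u v → qftW n u v < 1 →
        (∀ h : Fin n, u = Sum.inl h → qftf n hn u ≠ v) ∧
        (∀ h : Fin n, v = Sum.inl h → qftf n hn v ≠ u)) ∧
      (∀ h j : Fin n,
        qftW n (Sum.inl h) (Sum.inr j) = 1 ↔
          (Sum.inr j : qftV n) = qftf n hn (Sum.inl h)) := by
  refine ⟨rankOrder (qftRank n), isPartialOrder_rankOrder _,
    fun h j _ => rankOrder_of_lt (qftRank_inl_lt_inr h j),
    fun h h' hlt => rankOrder_of_lt (qftRank_inl_lt_inl hlt),
    fun h => ⟨fun _ => Sum.inr_ne_inl, qftAdj_inl_qftf hn h,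
      ⟨rankOrder_of_lt (qftRank_inl_lt_inr _ _), Sum.inl_ne_inr⟩,
      fun v hadj hne => ⟨rankOrder_of_lt (qftRank_lt_of_adj_qftf hn hadj hne), hne.symm⟩⟩,
    fun u v _ hlt => ⟨?_, ?_⟩, fun h j => ?_⟩
  · rintro h rfl rfl
    exact hlt.ne (qftW_inl_qftf hn h)
  · rintro h rfl rfl
    exact hlt.ne ((qftW_comm _ _).trans (qftW_inl_qftf hn h))
  · exact (qftW_inl_inr_eq_one_iff h j).trans ((qftf_inl_eq_inr_iff hn h j).symm.trans eq_comm)
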